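/- Completeness of Gradient⊙Input for zero-bias ReLU networks: let f : ℝⁿ → ℝ be computed by a ReLU network with zero biases, i.e. f = a ∘ σ ∘ A_{L−1} ∘ σ ∘ ⋯ ∘ σ ∘ A_1 with each A_k linear, a a linear functional, and σ the coordinatewise map z ↦ max(z, 0). If f is differentiable at x, then ∑_{i=1}^{n} x_i · (∂f/∂x_i)(x) = f(x). -/

import Mathlib

/-- The coordinatewise ReLU nonlinearity `σ(z)_i = max (z i) 0`. -/
def relu {m : ℕ} (z : EuclideanSpace ℝ (Fin m)) : EuclideanSpace ℝ (Fin m) :=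
  WithLp.toLp 2 (fun i => max (z i) 0)

/-- `IsZeroBiasReluNet f` holds iff `f = A_L ∘ σ ∘ A_{L−1} ∘ σ ∘ ⋯ ∘ σ ∘ A_1`
for some finite sequence of linear maps `A_k` (no bias terms), where `σ` is the
coordinatewise ReLU. -/
inductive IsZeroBiasReluNet :
    {n m : ℕ} → (EuclideanSpace ℝ (Fin n) → EuclideanSpace ℝ (Fin m)) → Prop
  | lin {n m : ℕ} (A : EuclideanSpace ℝ (Fin n) →ₗ[ℝ] EuclideanSpace ℝ (Fin m)) :
      IsZeroBiasReluNet A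
  | comp {n k m : ℕ} {f : EuclideanSpace ℝ (Fin n) → EuclideanSpace ℝ (Fin k)}
      (A : EuclideanSpace ℝ (Fin k) →ₗ[ℝ] EuclideanSpace ℝ (Fin m))
      (hf : IsZeroBiasReluNet f) :
      IsZeroBiasReluNet (fun x => A (relu (f x)))

lemma relu_smul {m : ℕ} (c : ℝ) (hc : 0 ≤ c) (z : EuclideanSpace ℝ (Fin m)) :
    relu (c • z) = c • relu z := by
  ext i
  have : (c • z) i = c * z i := rfl
  show max ((c • z) i) 0 = c * max (z i) 0
  rw [this, mul_max_of_nonneg _ _ hc, mul_zero]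

lemma reluNet_homog {n m : ℕ} {g : EuclideanSpace ℝ (Fin n) → EuclideanSpace ℝ (Fin m)}
    (hg : IsZeroBiasReluNet g) (c : ℝ) (hc : 0 ≤ c) (x : EuclideanSpace ℝ (Fin n)) :
    g (c • x) = c • g x := by
  induction hg with
  | lin A => exact A.map_smul c x
  | comp A hf ih =>
      show A (relu _) = c • A (relu _)
      rw [ih, relu_smul c hc, A.map_smul]

/-- **Completeness of Gradient⊙Input for zero-bias ReLU networks**: if the
scalar-valued function `f : ℝⁿ → ℝ` is computed by a ReLU network with zero
biases (a finite composition of linear maps interleaved with the coordinatewise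
ReLU, ending in a linear functional) and `f` is differentiable at `x`, then the
Gradient⊙Input scores sum to the output: `∑ i, x i * ∂f/∂x_i (x) = f x`. -/
theorem gradient_input_completeness_of_reluNet
    {n : ℕ} (f : EuclideanSpace ℝ (Fin n) → ℝ)
    (hnet : ∃ g : EuclideanSpace ℝ (Fin n) → EuclideanSpace ℝ (Fin 1),
      IsZeroBiasReluNet g ∧ f = fun x => g x 0)
    (x : EuclideanSpace ℝ (Fin n)) (hdiff : DifferentiableAt ℝ f x) :
    ∑ i : Fin n, x i * fderiv ℝ f x (EuclideanSpace.single i 1) = f x := by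
  obtain ⟨g, hg, rfl⟩ := hnet
  set f : EuclideanSpace ℝ (Fin n) → ℝ := fun x => g x 0 with hf
  have hhom : ∀ c : ℝ, 0 ≤ c → f (c • x) = c * f x := by
    intro c hc
    simp only [hf]
    rw [reluNet_homog hg c hc]
    rfl
  -- Euler identity
  have h1 : HasDerivAt (fun t : ℝ => f (x + t • x)) (fderiv ℝ f x x) 0 := by
    have hx : HasDerivAt (fun t : ℝ => x + t • x) x 0 := by
      simpa using ((hasDerivAt_id (0:ℝ)).smul_const x).const_add x
    have h0 : x + (0:ℝ) • x = x := by simp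
    have hF : HasFDerivAt f (fderiv ℝ f x) (x + (0:ℝ) • x) := by
      rw [zero_smul, add_zero]; exact hdiff.hasFDerivAt
    exact hF.comp_hasDerivAt 0 hx
  have h2 : HasDerivAt (fun t : ℝ => f (x + t • x)) (f x) 0 := by
    have heq : (fun t : ℝ => f (x + t • x)) =ᶠ[nhds (0:ℝ)]
        (fun t : ℝ => (1 + t) * f x) := by
      filter_upwards [Ioo_mem_nhds (by norm_num : (-1:ℝ) < 0) (by norm_num : (0:ℝ) < 1)]
        with t ht
      have h1t : (0:ℝ) ≤ 1 + t := by linarith [ht.1]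
      have : x + t • x = (1 + t) • x := by rw [add_smul, one_smul]
      rw [this, hhom _ h1t]
    have hlin : HasDerivAt (fun t : ℝ => (1 + t) * f x) (f x) 0 := by
      simpa using (((hasDerivAt_id (0:ℝ)).const_add 1).mul_const (f x))
    exact hlin.congr_of_eventuallyEq heq
  have heuler : fderiv ℝ f x x = f x := h1.unique h2
  have hx : x = ∑ i : Fin n, x i • EuclideanSpace.single i (1:ℝ) := by
    ext j
    have : (∑ i : Fin n, x i • EuclideanSpace.single i (1:ℝ)) j
        = ∑ i : Fin n, x i * EuclideanSpace.single i (1:ℝ) j := by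
      induction (Finset.univ : Finset (Fin n)) using Finset.induction with
      | empty => rfl
      | insert a s hnot ih => simp [Finset.sum_insert hnot, ih]
    rw [this]
    simp [EuclideanSpace.single_apply]
  have hD : ∀ D : EuclideanSpace ℝ (Fin n) →L[ℝ] ℝ,
      D x = ∑ i : Fin n, x i * D (EuclideanSpace.single i 1) := by
    intro D
    conv_lhs => rw [hx]
    rw [map_sum]
    simp
  rw [← hD (fderiv ℝ f x), heuler]
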